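/- Let α ∈ (−1/2, 1/2) and let 0 ≤ v < s be real numbers. For integers n ≥ 1 define B_n(v,s) = n^{2α+1} ∫_{⌊nv⌋/n}^{v} |(s − u)^α − (⌊ns⌋/n − u)^α| (v − u)^α du, where ⌊·⌋ denotes the floor function. Then B_n(v,s) → 0 as n → ∞. -/

import Mathlib

/-!
On `[⌊nv⌋/n, v]` both `s - u` and `⌊ns⌋/n - u` stay above `(s - v)/2` once `1/n ≤ (s - v)/2`,
and there `x ↦ x ^ α` is Lipschitz, so the first factor of the integrand is `O(s - ⌊ns⌋/n) = O(1/n)`.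
Integrating `(v - u) ^ α` over an interval of length at most `1/n` contributes `O(n^{-(α+1)})`,
hence `B_n(v, s) = O(n^{2α+1} · n⁻¹ · n^{-(α+1)}) = O(n^{α-1}) → 0`.
-/

open MeasureTheory Set

/-- The quantity `B_n(v,s)` from Lemma A.3 of the paper. -/
noncomputable def B (α : ℝ) (n : ℕ) (v s : ℝ) : ℝ :=
  (n : ℝ) ^ (2*α + 1) *
    ∫ u in Set.Ioc ((⌊(n:ℝ) * v⌋ : ℝ) / n) v,
      |(s - u) ^ α - ((⌊(n:ℝ) * s⌋ : ℝ) / n - u) ^ α| * (v - u) ^ α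

open Filter Topology

lemma abs_rpow_sub_rpow_le {α m x y : ℝ} (hα : α ≤ 1) (hm : 0 < m) (hx : m ≤ x) (hy : m ≤ y) :
    |x ^ α - y ^ α| ≤ |α| * m ^ (α - 1) * |x - y| := by
  have hderiv : ∀ t ∈ Ici m, HasDerivWithinAt (· ^ α) (α * t ^ (α - 1)) (Ici m) t :=
    fun t ht => (Real.hasDerivAt_rpow_const (Or.inl (hm.trans_le ht).ne')).hasDerivWithinAt
  have hbound : ∀ t ∈ Ici m, ‖α * t ^ (α - 1)‖ ≤ |α| * m ^ (α - 1) := fun t ht => by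
    rw [Real.norm_eq_abs, abs_mul, abs_of_nonneg (Real.rpow_nonneg (hm.trans_le ht).le _)]
    exact mul_le_mul_of_nonneg_left (Real.rpow_le_rpow_of_nonpos hm ht (by linarith))
      (abs_nonneg α)
  simpa [Real.norm_eq_abs] using
    (convex_Ici m).norm_image_sub_le_of_norm_hasDerivWithin_le hderiv hbound hy hx

lemma sub_floor_mul_div_eq_fract {n : ℝ} (hn : n ≠ 0) (x : ℝ) :
    x - ⌊n * x⌋ / n = Int.fract (n * x) / n := by
  rw [Int.fract]
  field_simp

lemma sub_floor_mul_div_mem_Icc {n : ℝ} (hn : 0 < n) (x : ℝ) :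
    x - ⌊n * x⌋ / n ∈ Icc 0 (1 / n) := by
  rw [sub_floor_mul_div_eq_fract hn.ne']
  exact ⟨div_nonneg (Int.fract_nonneg _) hn.le,
    div_le_div_of_nonneg_right (Int.fract_lt_one _).le hn.le⟩

section SubRpow

variable {α a v : ℝ}

lemma integrableOn_Ioc_sub_rpow (hα : -1 < α) :
    IntegrableOn (fun u => (v - u) ^ α) (Ioc a v) := by
  have h : IntervalIntegrable (fun t : ℝ => t ^ α) volume (v - a) 0 :=
    (intervalIntegral.intervalIntegrable_rpow' hα).symm
  simpa using (h.comp_sub_left v).1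

lemma setIntegral_Ioc_sub_rpow (hα : -1 < α) (hav : a ≤ v) :
    ∫ u in Ioc a v, (v - u) ^ α = (v - a) ^ (α + 1) / (α + 1) := by
  rw [← intervalIntegral.integral_of_le hav,
    intervalIntegral.integral_comp_sub_left (fun t : ℝ => t ^ α) v, sub_self,
    integral_rpow (Or.inl hα), Real.zero_rpow (by linarith)]
  ring

lemma abs_setIntegral_Ioc_mul_sub_rpow_le {f : ℝ → ℝ} {C : ℝ} (hα : -1 < α) (hav : a ≤ v)
    (hf : ∀ u ∈ Ioc a v, |f u| ≤ C) :
    |∫ u in Ioc a v, f u * (v - u) ^ α| ≤ C * ((v - a) ^ (α + 1) / (α + 1)) := by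
  rw [← setIntegral_Ioc_sub_rpow hα hav, ← integral_const_mul, ← Real.norm_eq_abs]
  refine norm_integral_le_of_norm_le ((integrableOn_Ioc_sub_rpow hα).const_mul C) ?_
  filter_upwards [ae_restrict_mem measurableSet_Ioc] with u hu
  have hpos : 0 ≤ (v - u) ^ α := Real.rpow_nonneg (sub_nonneg.2 hu.2) α
  rw [Real.norm_eq_abs, abs_mul, abs_of_nonneg hpos]
  exact mul_le_mul_of_nonneg_right (hf u hu) hpos

end SubRpow

lemma abs_B_le {α v s : ℝ} {n : ℕ} (hα : α ∈ Ioc (-1) 1) (hn : 0 < n)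
    (hn_large : 1 / (n : ℝ) ≤ (s - v) / 2) :
    |B α n v s| ≤ |α| * ((s - v) / 2) ^ (α - 1) / (α + 1) * (n : ℝ) ^ (α - 1) := by
  set m := (s - v) / 2 with hm_def
  set L := |α| * m ^ (α - 1)
  have hn0 : (0 : ℝ) < n := Nat.cast_pos.2 hn
  have hm : 0 < m := (one_div_pos.2 hn0).trans_le hn_large
  have hL : 0 ≤ L := by positivity
  obtain ⟨hva₀, hva⟩ := sub_floor_mul_div_mem_Icc hn0 v
  obtain ⟨hsb₀, hsb⟩ := sub_floor_mul_div_mem_Icc hn0 s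
  set a : ℝ := ⌊(n : ℝ) * v⌋ / n
  set b : ℝ := ⌊(n : ℝ) * s⌋ / n
  have hintegrand : ∀ u ∈ Ioc a v, |(|(s - u) ^ α - (b - u) ^ α|)| ≤ L / n := by
    intro u hu
    have hsu : m ≤ s - u := by linarith [hu.2]
    have hbu : m ≤ b - u := by linarith [hu.2]
    calc |(|(s - u) ^ α - (b - u) ^ α|)| ≤ L * |(s - u) - (b - u)| := by
          rw [abs_abs]; exact abs_rpow_sub_rpow_le hα.2 hm hsu hbu
      _ ≤ L / n := by
          rw [sub_sub_sub_cancel_right, abs_of_nonneg hsb₀, div_eq_mul_one_div]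
          exact mul_le_mul_of_nonneg_left hsb hL
  have hintegral := abs_setIntegral_Ioc_mul_sub_rpow_le hα.1 (sub_nonneg.1 hva₀) hintegrand
  have hpow : (v - a) ^ (α + 1) ≤ (1 / (n : ℝ)) ^ (α + 1) :=
    Real.rpow_le_rpow hva₀ hva (by linarith [hα.1])
  have hnpow : (n : ℝ) ^ (2 * α + 1) * (1 / n) * (1 / n) ^ (α + 1) = (n : ℝ) ^ (α - 1) := by
    rw [one_div, ← Real.rpow_neg_one, ← Real.rpow_mul hn0.le, ← Real.rpow_add hn0,
      ← Real.rpow_add hn0]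
    ring_nf
  have hα1 : 0 < α + 1 := by linarith [hα.1]
  calc |B α n v s|
      = (n : ℝ) ^ (2 * α + 1) *
          |∫ u in Ioc a v, |(s - u) ^ α - (b - u) ^ α| * (v - u) ^ α| := by
        rw [B, abs_mul, abs_of_nonneg (by positivity)]
    _ ≤ (n : ℝ) ^ (2 * α + 1) * (L / n * ((1 / n) ^ (α + 1) / (α + 1))) := by
        gcongr
        exact hintegral.trans (by gcongr)
    _ = L / (α + 1) * (n : ℝ) ^ (α - 1) := by
        rw [← hnpow]; ring

theorem stmt_10_general (α v s : ℝ) (hα : α ∈ Set.Ioo (-(1:ℝ)/2) (1/2))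
    (hvs : v < s) :
    Filter.Tendsto (fun n : ℕ => B α n v s) Filter.atTop (nhds 0) := by
  obtain ⟨hα₁, hα₂⟩ := hα
  have hlarge : ∀ᶠ n : ℕ in atTop, 0 < n ∧ 1 / (n : ℝ) ≤ (s - v) / 2 :=
    (eventually_gt_atTop 0).and <|
      tendsto_one_div_atTop_nhds_zero_nat.eventually (eventually_le_nhds (by linarith))
  have hbound : ∀ᶠ n : ℕ in atTop,
      ‖B α n v s‖ ≤ |α| * ((s - v) / 2) ^ (α - 1) / (α + 1) * (n : ℝ) ^ (α - 1) :=
    hlarge.mono fun n ⟨hn, hn_large⟩ =>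
      abs_B_le (α := α) ⟨by linarith, by linarith⟩ hn hn_large
  have hdecay : Tendsto (fun n : ℕ => (n : ℝ) ^ (α - 1)) atTop (𝓝 0) := by
    simpa [Function.comp_def, neg_sub] using
      (tendsto_rpow_neg_atTop (by linarith : (0 : ℝ) < 1 - α)).comp tendsto_natCast_atTop_atTop
  exact squeeze_zero_norm' hbound (by simpa using hdecay.const_mul _)

/-- Lemma A.3 of the paper. -/
theorem stmt_10 (α v s : ℝ) (hα : α ∈ Set.Ioo (-(1:ℝ)/2) (1/2))
    (hv : 0 ≤ v) (hvs : v < s) :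
    Filter.Tendsto (fun n : ℕ => B α n v s) Filter.atTop (nhds 0) :=
  stmt_10_general α v s hα hvs
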